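/- For the anisotropic oscillator with Hamiltonian H₁ = (p₁²+p₂²)/2 - (k₁²q₁²+k₂²q₂²)/2 - (β₁q₁+β₂q₂)/2 with k₁,k₂ ≠ 0, the function Φ = (p₁ - (2k₁²q₁+β₁)/(2k₁))·(p₂ + (2k₂²q₂+β₂)/(2k₂)) satisfies {H₁, Φ} = (k₂ - k₁)·Φ along the Hamiltonian flow structure; in particular when k₁ = k₂ the function Φ is an integral of motion: {H₁,Φ} = 0. -/

import Mathlib

/-! Write `Φ = A * B` with `A = p₁ - k₁ q₁ - β₁/(2k₁)` and `B = p₂ + k₂ q₂ + β₂/(2k₂)`.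
The Hamiltonian separates, and each factor is an eigenfunction of its one-dimensional part:
`{H₁, A} = -k₁ A` and `{H₁, B} = k₂ B`. By the Leibniz rule `{H₁, Φ} = (k₂ - k₁) Φ`. -/

noncomputable def pb (F G : ℝ → ℝ → ℝ → ℝ → ℝ) (q₁ q₂ p₁ p₂ : ℝ) : ℝ :=
  deriv (fun t => F q₁ q₂ t p₂) p₁ * deriv (fun t => G t q₂ p₁ p₂) q₁
  - deriv (fun t => F t q₂ p₁ p₂) q₁ * deriv (fun t => G q₁ q₂ t p₂) p₁
  + deriv (fun t => F q₁ q₂ p₁ t) p₂ * deriv (fun t => G q₁ t p₁ p₂) q₂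
  - deriv (fun t => F q₁ t p₁ p₂) q₂ * deriv (fun t => G q₁ q₂ p₁ t) p₂

noncomputable def H₁os (k₁ k₂ β₁ β₂ : ℝ) : ℝ → ℝ → ℝ → ℝ → ℝ :=
  fun q₁ q₂ p₁ p₂ => (p₁^2 + p₂^2)/2 - (k₁^2*q₁^2 + k₂^2*q₂^2)/2 - (β₁*q₁ + β₂*q₂)/2

noncomputable def Φos (k₁ k₂ β₁ β₂ : ℝ) : ℝ → ℝ → ℝ → ℝ → ℝ :=
  fun q₁ q₂ p₁ p₂ => (p₁ - (2*k₁^2*q₁ + β₁)/(2*k₁)) * (p₂ + (2*k₂^2*q₂ + β₂)/(2*k₂))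

section PartialDerivatives

variable (k₁ k₂ β₁ β₂ q₁ q₂ p₁ p₂ : ℝ)

lemma deriv_H₁os_q₁ :
    deriv (fun t => H₁os k₁ k₂ β₁ β₂ t q₂ p₁ p₂) q₁ = -(k₁^2*q₁) - β₁/2 := by
  simp (disch := fun_prop) only [H₁os, deriv_fun_sub, deriv_fun_add, deriv_const', deriv_div_const,
    deriv_const_mul_field', deriv_pow_field, deriv_const_mul_id']
  ring

lemma deriv_H₁os_q₂ :
    deriv (fun t => H₁os k₁ k₂ β₁ β₂ q₁ t p₁ p₂) q₂ = -(k₂^2*q₂) - β₂/2 := by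
  simp (disch := fun_prop) only [H₁os, deriv_fun_sub, deriv_fun_add, deriv_const', deriv_div_const,
    deriv_const_mul_field', deriv_pow_field, deriv_const_mul_id']
  ring

lemma deriv_H₁os_p₁ : deriv (fun t => H₁os k₁ k₂ β₁ β₂ q₁ q₂ t p₂) p₁ = p₁ := by
  simp [H₁os]

lemma deriv_H₁os_p₂ : deriv (fun t => H₁os k₁ k₂ β₁ β₂ q₁ q₂ p₁ t) p₂ = p₂ := by
  simp [H₁os]

lemma deriv_Φos_q₁ (hk₁ : k₁ ≠ 0) :
    deriv (fun t => Φos k₁ k₂ β₁ β₂ t q₂ p₁ p₂) q₁ =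
      -k₁ * (p₂ + (2*k₂^2*q₂ + β₂)/(2*k₂)) := by
  simp only [Φos, deriv_mul_const_field', deriv_const_sub', deriv_div_const, deriv_add_const',
    deriv_const_mul_id']
  field_simp

lemma deriv_Φos_q₂ (hk₂ : k₂ ≠ 0) :
    deriv (fun t => Φos k₁ k₂ β₁ β₂ q₁ t p₁ p₂) q₂ =
      k₂ * (p₁ - (2*k₁^2*q₁ + β₁)/(2*k₁)) := by
  simp only [Φos, deriv_const_mul_field', deriv_const_add', deriv_div_const, deriv_add_const',
    deriv_const_mul_id']
  field_simp

lemma deriv_Φos_p₁ :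
    deriv (fun t => Φos k₁ k₂ β₁ β₂ q₁ q₂ t p₂) p₁ = p₂ + (2*k₂^2*q₂ + β₂)/(2*k₂) := by
  simp [Φos]

lemma deriv_Φos_p₂ :
    deriv (fun t => Φos k₁ k₂ β₁ β₂ q₁ q₂ p₁ t) p₂ = p₁ - (2*k₁^2*q₁ + β₁)/(2*k₁) := by
  simp [Φos]

end PartialDerivatives

theorem stmt5 (k₁ k₂ β₁ β₂ : ℝ) (hk₁ : k₁ ≠ 0) (hk₂ : k₂ ≠ 0) (q₁ q₂ p₁ p₂ : ℝ) :
    pb (H₁os k₁ k₂ β₁ β₂) (Φos k₁ k₂ β₁ β₂) q₁ q₂ p₁ p₂ =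
      (k₂ - k₁) * Φos k₁ k₂ β₁ β₂ q₁ q₂ p₁ p₂ ∧
    (k₁ = k₂ → pb (H₁os k₁ k₂ β₁ β₂) (Φos k₁ k₂ β₁ β₂) q₁ q₂ p₁ p₂ = 0) := by
  have bracket : pb (H₁os k₁ k₂ β₁ β₂) (Φos k₁ k₂ β₁ β₂) q₁ q₂ p₁ p₂ =
      (k₂ - k₁) * Φos k₁ k₂ β₁ β₂ q₁ q₂ p₁ p₂ := by
    rw [pb, deriv_H₁os_q₁, deriv_H₁os_q₂, deriv_H₁os_p₁, deriv_H₁os_p₂, deriv_Φos_q₁ (hk₁ := hk₁),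
      deriv_Φos_q₂ (hk₂ := hk₂), deriv_Φos_p₁, deriv_Φos_p₂, Φos]
    field_simp
    ring
  refine ⟨bracket, fun h => ?_⟩
  rw [bracket, h, sub_self, zero_mul]
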